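/- arXiv:1904.08498 — 5 statements merged into one kernel-verified Lean document; each statement's English description precedes it below -/
import Mathlib

section
/- Let M : ℝ → Mat₈(ℝ) be differentiable with M(t) symmetric, let C : ℝ → Mat₈(ℝ) with Ṁ(t) − 2C(t) skew-symmetric for all t, and let e_v, δ : ℝ → ℝ⁸ with e_v differentiable satisfy M(t) ė_v(t) + C(t) e_v(t) + K_v e_v(t) = δ(t) for a constant 8×8 matrix K_v. Assume there are constants 0 < λ_min ≤ λ_max with λ_min‖ν‖² ≤ νᵀ M(t) ν ≤ λ_max‖ν‖² for all ν ∈ ℝ⁸ and all t, and a constant k > 0 with νᵀ K_v ν ≥ k‖ν‖² for all ν ∈ ℝ⁸. Then V(t) := (1/2) e_v(t)ᵀ M(t) e_v(t) satisfies V'(t) ≤ −γ V(t) + √(2V(t)/λ_min) · ‖δ(t)‖ for all t, where γ := 2k/λ_max. -/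
/-!
Differentiating `V = ½ eᵀ M e` along the error dynamics gives
`V' = ½ eᵀ Ṁ e + eᵀ M ė = eᵀ δ − eᵀ K_v e + ½ eᵀ (Ṁ − 2C) e`, and the last term vanishes by
skew-symmetry. The damping term is bounded by `−k‖e‖² ≤ −(2k/λ_max) V` using the upper inertia
bound, and the disturbance term by Cauchy–Schwarz together with `‖e‖² ≤ 2V/λ_min` from the lower
inertia bound.
-/

open Matrix

section QuadraticForm

variable {n : Type*} [Fintype n]

theorem hasDerivAt_dotProduct_mulVec {A : ℝ → Matrix n n ℝ} {A' : Matrix n n ℝ}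
    {x y : ℝ → n → ℝ} {x' y' : n → ℝ} {t : ℝ}
    (hA : ∀ i j, HasDerivAt (fun s => A s i j) (A' i j) t)
    (hx : HasDerivAt x x' t) (hy : HasDerivAt y y' t) :
    HasDerivAt (fun s => x s ⬝ᵥ (A s *ᵥ y s))
      (x' ⬝ᵥ (A t *ᵥ y t) + x t ⬝ᵥ (A' *ᵥ y t) + x t ⬝ᵥ (A t *ᵥ y')) t := by
  have hxi : ∀ i, HasDerivAt (fun s => x s i) (x' i) t := hasDerivAt_pi.mp hx
  have hyj : ∀ j, HasDerivAt (fun s => y s j) (y' j) t := hasDerivAt_pi.mp hy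
  have hsum := HasDerivAt.fun_sum fun i (_ : i ∈ Finset.univ) =>
    (hxi i).mul (HasDerivAt.fun_sum fun j (_ : j ∈ Finset.univ) => (hA i j).mul (hyj j))
  refine hsum.congr_deriv ?_
  simp only [dotProduct, mulVec, Pi.mul_apply, mul_add, Finset.mul_sum, Finset.sum_add_distrib]
  ring

theorem Matrix.IsSymm.dotProduct_mulVec_comm {R : Type*} [CommSemiring R]
    {A : Matrix n n R} (hA : A.IsSymm) (x y : n → R) :
    x ⬝ᵥ (A *ᵥ y) = y ⬝ᵥ (A *ᵥ x) := by
  rw [← dotProduct_transpose_mulVec, hA.eq]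

theorem dotProduct_mulVec_self_eq_zero_of_transpose_eq_neg {R : Type*} [CommRing R]
    [IsAddTorsionFree R] {A : Matrix n n R} (hA : Aᵀ = -A) (x : n → R) :
    x ⬝ᵥ (A *ᵥ x) = 0 := by
  have h := dotProduct_transpose_mulVec A x x
  rw [hA, neg_mulVec, dotProduct_neg] at h
  exact self_eq_neg.mp h.symm

theorem dotProduct_le_sqrt_mul_sqrt (x y : n → ℝ) :
    x ⬝ᵥ y ≤ √(x ⬝ᵥ x) * √(y ⬝ᵥ y) := by
  simpa only [dotProduct, sq] using Real.sum_mul_le_sqrt_mul_sqrt Finset.univ x y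

end QuadraticForm

theorem hasDerivAt_lyapunov {n : Type*} [Fintype n] {M C : ℝ → Matrix n n ℝ}
    {M' Kv : Matrix n n ℝ} {e : ℝ → n → ℝ} {e' δ : n → ℝ} {t : ℝ}
    (hM : ∀ i j, HasDerivAt (fun s => M s i j) (M' i j) t) (hsymm : (M t).IsSymm)
    (hskew : (M' - (2 : ℝ) • C t)ᵀ = -(M' - (2 : ℝ) • C t)) (he : HasDerivAt e e' t)
    (hdyn : M t *ᵥ e' + C t *ᵥ e t + Kv *ᵥ e t = δ) :
    HasDerivAt (fun s => (1 / 2 : ℝ) * (e s ⬝ᵥ (M s *ᵥ e s)))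
      (e t ⬝ᵥ δ - e t ⬝ᵥ (Kv *ᵥ e t)) t := by
  refine ((hasDerivAt_dotProduct_mulVec hM he he).const_mul _).congr_deriv ?_
  have hcoriolis := dotProduct_mulVec_self_eq_zero_of_transpose_eq_neg hskew (e t)
  rw [sub_mulVec, smul_mulVec, dotProduct_sub, dotProduct_smul, smul_eq_mul] at hcoriolis
  rw [hsymm.dotProduct_mulVec_comm e', ← hdyn]
  simp only [dotProduct_add]
  linarith

/-- For the error dynamics `M ė_v + C e_v + K_v e_v = δ` with the standard robot
properties (`λ_min‖ν‖² ≤ νᵀMν ≤ λ_max‖ν‖²`, `Ṁ − 2C` skew-symmetric) and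
`νᵀ K_v ν ≥ k‖ν‖²`, the Lyapunov function `V = ½ e_vᵀ M e_v` satisfies
`V' ≤ −γ V + √(2V/λ_min) ‖δ‖`, where `γ = 2k/λ_max`. -/
theorem stmt_4 (M M' C : ℝ → Matrix (Fin 8) (Fin 8) ℝ)
    (Kv : Matrix (Fin 8) (Fin 8) ℝ)
    (ev ev' δ : ℝ → Fin 8 → ℝ)
    (lmin lmax k : ℝ) (hlmin : 0 < lmin) (hl : lmin ≤ lmax) (hk : 0 < k)
    (hM : ∀ t i j, HasDerivAt (fun s => M s i j) (M' t i j) t)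
    (hsymm : ∀ t, (M t).IsSymm)
    (hskew : ∀ t, (M' t - (2 : ℝ) • C t)ᵀ = -(M' t - (2 : ℝ) • C t))
    (hev : ∀ t, HasDerivAt ev (ev' t) t)
    (hdyn : ∀ t, M t *ᵥ ev' t + C t *ᵥ ev t + Kv *ᵥ ev t = δ t)
    (hbound : ∀ t (ν : Fin 8 → ℝ), lmin * (ν ⬝ᵥ ν) ≤ ν ⬝ᵥ (M t *ᵥ ν)
        ∧ ν ⬝ᵥ (M t *ᵥ ν) ≤ lmax * (ν ⬝ᵥ ν))
    (hKv : ∀ ν : Fin 8 → ℝ, k * (ν ⬝ᵥ ν) ≤ ν ⬝ᵥ (Kv *ᵥ ν)) :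
    ∀ t, deriv (fun s => (1 / 2 : ℝ) * (ev s ⬝ᵥ (M s *ᵥ ev s))) t
        ≤ -(2 * k / lmax) * ((1 / 2 : ℝ) * (ev t ⬝ᵥ (M t *ᵥ ev t)))
          + Real.sqrt (2 * ((1 / 2 : ℝ) * (ev t ⬝ᵥ (M t *ᵥ ev t))) / lmin)
            * Real.sqrt (δ t ⬝ᵥ δ t) := by
  intro t
  rw [(hasDerivAt_lyapunov (hM t) (hsymm t) (hskew t) (hev t) (hdyn t)).deriv]
  have hlmax : 0 < lmax := hlmin.trans_le hl
  obtain ⟨hlower, hupper⟩ := hbound t (ev t)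
  have hdamping : 2 * k / lmax * ((1 / 2 : ℝ) * (ev t ⬝ᵥ (M t *ᵥ ev t)))
      ≤ ev t ⬝ᵥ (Kv *ᵥ ev t) := by
    refine le_trans ?_ (hKv (ev t))
    rw [div_mul_eq_mul_div, div_le_iff₀ hlmax]
    linarith [mul_le_mul_of_nonneg_left hupper hk.le]
  have hnorm : √(ev t ⬝ᵥ ev t) ≤ √(2 * ((1 / 2 : ℝ) * (ev t ⬝ᵥ (M t *ᵥ ev t))) / lmin) :=
    Real.sqrt_le_sqrt (by rw [le_div_iff₀ hlmin]; linarith)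
  have hdisturbance := (dotProduct_le_sqrt_mul_sqrt (ev t) (δ t)).trans
    (mul_le_mul_of_nonneg_right hnorm (Real.sqrt_nonneg _))
  linarith
end

section
/- Let m > 0, T > 0, g ∈ ℝ, and ψ, θ, φ, ẍ, ÿ, z̈, F_x, F_y, F_z ∈ ℝ satisfy the translational dynamics m ẍ = T(cosψ sinθ cosφ + sinψ sinφ) + F_x, m ÿ = T(sinψ sinθ cosφ − cosψ sinφ) + F_y and m z̈ = −m g + T cosθ cosφ + F_z. Define ẍ_f := ẍ − F_x/m, ÿ_f := ÿ − F_y/m and z̈_f := z̈ + g − F_z/m. Then ẍ_f² + ÿ_f² + z̈_f² = (T/m)² and sinφ = (ẍ_f sinψ − ÿ_f cosψ)/√(ẍ_f² + ÿ_f² + z̈_f²). -/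
/-!
The compensated acceleration `(ẍ_f, ÿ_f, z̈_f)` is `T/m` times the third column `b₃` of the
ZYX rotation matrix. Since `b₃` is a unit vector, its squared norm is `(T/m)²`, and since
`b₃ₓ sin ψ − b₃ᵧ cos ψ = sin φ`, dividing by the norm `T/m > 0` recovers `sin φ`.
-/

open Real

namespace ZYXRotation

/-- Third column of the ZYX (yaw `ψ`, pitch `θ`, roll `φ`) rotation matrix. -/
noncomputable def thirdColumn (ψ θ φ : ℝ) : ℝ × ℝ × ℝ :=
  (cos ψ * sin θ * cos φ + sin ψ * sin φ,
    sin ψ * sin θ * cos φ - cos ψ * sin φ,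
    cos θ * cos φ)

theorem thirdColumn_normSq (ψ θ φ : ℝ) :
    let b := thirdColumn ψ θ φ
    b.1 ^ 2 + b.2.1 ^ 2 + b.2.2 ^ 2 = 1 := by
  simp only [thirdColumn]
  linear_combination (sin θ ^ 2 * cos φ ^ 2 + sin φ ^ 2) * sin_sq_add_cos_sq ψ +
    cos φ ^ 2 * sin_sq_add_cos_sq θ + sin_sq_add_cos_sq φ

theorem thirdColumn_roll (ψ θ φ : ℝ) :
    let b := thirdColumn ψ θ φ
    b.1 * sin ψ - b.2.1 * cos ψ = sin φ := by
  simp only [thirdColumn]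
  linear_combination sin φ * sin_sq_add_cos_sq ψ

end ZYXRotation

theorem sub_div_eq_of_mul_eq {m a T u F : ℝ} (hm : m ≠ 0) (h : m * a = T * u + F) :
    a - F / m = T / m * u := by
  field_simp
  linarith

open ZYXRotation in
/-- First second-order nonholonomic constraint of the quadrotor manipulation system:
from the translational dynamics, the compensated accelerations satisfy
`ẍ_f² + ÿ_f² + z̈_f² = (T/m)²` and `sin φ = (ẍ_f sin ψ − ÿ_f cos ψ)/√(ẍ_f² + ÿ_f² + z̈_f²)`. -/
theorem stmt_8 (m T g ψ θ φ xdd ydd zdd Fx Fy Fz : ℝ)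
    (hm : 0 < m) (hT : 0 < T)
    (h1 : m * xdd = T * (Real.cos ψ * Real.sin θ * Real.cos φ + Real.sin ψ * Real.sin φ) + Fx)
    (h2 : m * ydd = T * (Real.sin ψ * Real.sin θ * Real.cos φ - Real.cos ψ * Real.sin φ) + Fy)
    (h3 : m * zdd = -(m * g) + T * (Real.cos θ * Real.cos φ) + Fz)
    (xf yf zf : ℝ)
    (hxf : xf = xdd - Fx / m) (hyf : yf = ydd - Fy / m) (hzf : zf = zdd + g - Fz / m) :
    xf ^ 2 + yf ^ 2 + zf ^ 2 = (T / m) ^ 2 ∧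
      Real.sin φ = (xf * Real.sin ψ - yf * Real.cos ψ) / Real.sqrt (xf ^ 2 + yf ^ 2 + zf ^ 2) := by
  have hm₀ : m ≠ 0 := hm.ne'
  have hx : xf = T / m * (thirdColumn ψ θ φ).1 := hxf ▸ sub_div_eq_of_mul_eq hm₀ h1
  have hy : yf = T / m * (thirdColumn ψ θ φ).2.1 := hyf ▸ sub_div_eq_of_mul_eq hm₀ h2
  have hz : zf = T / m * (thirdColumn ψ θ φ).2.2 := by
    rw [hzf, show zdd + g - Fz / m = zdd - (Fz - m * g) / m by field_simp; ring]
    exact sub_div_eq_of_mul_eq hm₀ (by rw [h3]; simp only [thirdColumn]; ring)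
  have hnorm : xf ^ 2 + yf ^ 2 + zf ^ 2 = (T / m) ^ 2 := by
    rw [hx, hy, hz]
    linear_combination (T / m) ^ 2 * thirdColumn_normSq ψ θ φ
  have hroll : xf * sin ψ - yf * cos ψ = T / m * sin φ := by
    rw [hx, hy]
    linear_combination T / m * thirdColumn_roll ψ θ φ
  refine ⟨hnorm, ?_⟩
  rw [hnorm, sqrt_sq (div_pos hT hm).le, hroll]
  field_simp
end

section
/- Let m > 0, T > 0, g ∈ ℝ, and ψ, θ, φ, ẍ, ÿ, z̈, F_x, F_y, F_z ∈ ℝ satisfy the translational dynamics m ẍ = T(cosψ sinθ cosφ + sinψ sinφ) + F_x, m ÿ = T(sinψ sinθ cosφ − cosψ sinφ) + F_y and m z̈ = −m g + T cosθ cosφ + F_z, and assume cosθ ≠ 0 and cosφ ≠ 0. Define ẍ_f := ẍ − F_x/m, ÿ_f := ÿ − F_y/m and z̈_f := z̈ + g − F_z/m. Then z̈_f ≠ 0 and tanθ = (ẍ_f cosψ + ÿ_f sinψ)/z̈_f. -/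
/-!
Once the manipulator forces are subtracted, `(ẍ_f, ÿ_f, z̈_f)` is `T / m` times the body
`z`-axis `R e₃ = (cψ sθ cφ + sψ sφ, sψ sθ cφ - cψ sφ, cθ cφ)`. Projecting its horizontal part
on the heading `(cψ, sψ)` leaves `(T / m) sθ cφ`, while the vertical part is `(T / m) cθ cφ`;
the common factor `T cφ / m` is nonzero and cancels in the quotient, leaving `tan θ`.
-/

open Real

lemma sub_div_eq_div_of_mul_eq_add {K : Type*} [Field K] {m a u F : K} (hm : m ≠ 0)
    (h : m * a = u + F) : a - F / m = u / m := by
  field_simp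
  linear_combination h

lemma cos_mul_add_sin_mul_bodyAxis (ψ θ φ : ℝ) :
    cos ψ * (cos ψ * sin θ * cos φ + sin ψ * sin φ)
      + sin ψ * (sin ψ * sin θ * cos φ - cos ψ * sin φ) = sin θ * cos φ := by
  linear_combination sin θ * cos φ * sin_sq_add_cos_sq ψ

lemma tan_eq_mul_sin_div_mul_cos {c θ : ℝ} (hc : c ≠ 0) :
    tan θ = c * sin θ / (c * cos θ) := by
  rw [tan_eq_sin_div_cos, mul_div_mul_left _ _ hc]

/-- Second second-order nonholonomic constraint of the quadrotor manipulation system: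
if `cos θ ≠ 0` and `cos φ ≠ 0`, then `z̈_f ≠ 0` and
`tan θ = (ẍ_f cos ψ + ÿ_f sin ψ)/z̈_f`. -/
theorem stmt_9 (m T g ψ θ φ xdd ydd zdd Fx Fy Fz : ℝ)
    (hm : 0 < m) (hT : 0 < T)
    (h1 : m * xdd = T * (Real.cos ψ * Real.sin θ * Real.cos φ + Real.sin ψ * Real.sin φ) + Fx)
    (h2 : m * ydd = T * (Real.sin ψ * Real.sin θ * Real.cos φ - Real.cos ψ * Real.sin φ) + Fy)
    (h3 : m * zdd = -(m * g) + T * (Real.cos θ * Real.cos φ) + Fz)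
    (hθ : Real.cos θ ≠ 0) (hφ : Real.cos φ ≠ 0)
    (xf yf zf : ℝ)
    (hxf : xf = xdd - Fx / m) (hyf : yf = ydd - Fy / m) (hzf : zf = zdd + g - Fz / m) :
    zf ≠ 0 ∧ Real.tan θ = (xf * Real.cos ψ + yf * Real.sin ψ) / zf := by
  have hm₀ : m ≠ 0 := hm.ne'
  have hx : xf = T * (cos ψ * sin θ * cos φ + sin ψ * sin φ) / m :=
    hxf ▸ sub_div_eq_div_of_mul_eq_add hm₀ h1
  have hy : yf = T * (sin ψ * sin θ * cos φ - cos ψ * sin φ) / m :=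
    hyf ▸ sub_div_eq_div_of_mul_eq_add hm₀ h2
  have hz : zf = T * cos φ / m * cos θ := by
    rw [hzf, sub_div_eq_div_of_mul_eq_add (u := T * (cos θ * cos φ)) hm₀
      (by linear_combination h3)]
    ring
  have hscale : T * cos φ / m ≠ 0 := by positivity
  have hhoriz : xf * cos ψ + yf * sin ψ = T * cos φ / m * sin θ := by
    rw [hx, hy]
    linear_combination T / m * cos_mul_add_sin_mul_bodyAxis ψ θ φ
  refine ⟨hz ▸ mul_ne_zero hscale hθ, ?_⟩
  rw [hhoriz, hz]
  exact tan_eq_mul_sin_div_mul_cos hscale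
end

section
/- Let ψ, θ, φ : ℝ → ℝ be differentiable, and let R(t) := R_b(ψ(t),θ(t),φ(t)) be the corresponding ZYX yaw–pitch–roll rotation matrix. Define T_b(ψ,θ) := [[0, −sinψ, cosψ cosθ],[0, cosψ, sinψ cosθ],[1, 0, −sinθ]] and ω_b(t) := T_b(ψ(t),θ(t)) · (ψ̇(t), θ̇(t), φ̇(t)). Then R is differentiable with R'(t) = Skew(ω_b(t)) · R(t) for all t; i.e. T_b transforms the Euler-angle rates Φ̇_b = (ψ̇, θ̇, φ̇) into the body angular velocity ω_b. -/
/-! `R_b(ψ,θ,φ)` factors as `R_z(ψ) R_y(θ) R_x(φ)`, and each elementary rotation satisfies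
`Ṙ_a = (rate) Skew(e_a) R_a`, so by the product rule
`Ṙ = ψ̇ Skew(e₃) R + θ̇ R_z Skew(e₂) R_y R_x + φ̇ R_z R_y Skew(e₁) R_x`.
A rotation `Q` satisfies `Q Skew(v) = Skew(Q v) Q`, because `Q v × Q w = Q (v × w)` (the adjugate
of `Q` is `Qᵀ`). Hence `Ṙ = Skew(ψ̇ e₃ + θ̇ R_z e₂ + φ̇ R_z R_y e₁) R`, and `e₃`, `R_z e₂`,
`R_z R_y e₁` are exactly the columns of `T_b`. -/

open Matrix

/-- ZYX yaw–pitch–roll rotation matrix of the quadrotor body frame. -/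
noncomputable def Rb (ψ θ φ : ℝ) : Matrix (Fin 3) (Fin 3) ℝ :=
  !![Real.cos ψ * Real.cos θ,
     Real.sin φ * Real.sin θ * Real.cos ψ - Real.sin ψ * Real.cos φ,
     Real.sin ψ * Real.sin φ + Real.cos ψ * Real.sin θ * Real.cos φ;
     Real.sin ψ * Real.cos θ,
     Real.cos ψ * Real.cos φ + Real.sin ψ * Real.sin θ * Real.sin φ,
     Real.sin ψ * Real.sin θ * Real.cos φ - Real.cos ψ * Real.sin φ;
     -Real.sin θ, Real.cos θ * Real.sin φ, Real.cos θ * Real.cos φ]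

/-- The matrix transforming ZYX Euler-angle rates into the body angular velocity. -/
noncomputable def Tb (ψ θ : ℝ) : Matrix (Fin 3) (Fin 3) ℝ :=
  !![0, -Real.sin ψ, Real.cos ψ * Real.cos θ;
     0, Real.cos ψ, Real.sin ψ * Real.cos θ;
     1, 0, -Real.sin θ]

/-- The skew-symmetric matrix of `v ∈ ℝ³`, so that `skew v *ᵥ w = v × w`. -/
def skew (v : Fin 3 → ℝ) : Matrix (Fin 3) (Fin 3) ℝ :=
  !![0, -v 2, v 1; v 2, 0, -v 0; -v 1, v 0, 0]

theorem skew_mulVec (v w : Fin 3 → ℝ) : skew v *ᵥ w = v ⨯₃ w := by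
  ext i; fin_cases i <;> simp [skew, cross_apply, mulVec, dotProduct, Fin.sum_univ_three] <;> ring

theorem skew_add (v w : Fin 3 → ℝ) : skew (v + w) = skew v + skew w := by
  ext i j; fin_cases i <;> fin_cases j <;> simp [skew] <;> ring

theorem skew_smul (c : ℝ) (v : Fin 3 → ℝ) : skew (c • v) = c • skew v := by
  ext i j; fin_cases i <;> fin_cases j <;> simp [skew]

theorem cross_mulVec_mulVec {R : Type*} [CommRing R] (A : Matrix (Fin 3) (Fin 3) R)
    (u v : Fin 3 → R) : (A *ᵥ u) ⨯₃ (A *ᵥ v) = (adjugate A)ᵀ *ᵥ (u ⨯₃ v) := by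
  ext i
  fin_cases i <;>
    simp [adjugate_fin_three, cross_apply, mulVec, dotProduct, Fin.sum_univ_three] <;> ring

theorem adjugate_eq_transpose_of_mem_specialOrthogonalGroup {n R : Type*} [Fintype n]
    [DecidableEq n] [CommRing R] {Q : Matrix n n R} (hQ : Q ∈ specialOrthogonalGroup n R) :
    adjugate Q = Qᵀ := by
  obtain ⟨horth, hdet⟩ := mem_specialOrthogonalGroup_iff.1 hQ
  calc adjugate Q = Qᵀ * Q * adjugate Q := by
        rw [(mem_orthogonalGroup_iff' _ _).1 horth, Matrix.one_mul]
    _ = Qᵀ := by rw [Matrix.mul_assoc, mul_adjugate, hdet, one_smul, Matrix.mul_one]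

theorem mul_skew_of_mem_specialOrthogonalGroup {Q : Matrix (Fin 3) (Fin 3) ℝ}
    (hQ : Q ∈ specialOrthogonalGroup (Fin 3) ℝ) (v : Fin 3 → ℝ) :
    Q * skew v = skew (Q *ᵥ v) * Q := by
  refine ext_iff_mulVec.2 fun w => ?_
  rw [← mulVec_mulVec, ← mulVec_mulVec, skew_mulVec, skew_mulVec, cross_mulVec_mulVec,
    adjugate_eq_transpose_of_mem_specialOrthogonalGroup hQ, transpose_transpose]

theorem hasDerivAt_matrix_mul_apply {𝕜 : Type*} [NontriviallyNormedField 𝕜] {l m n : Type*}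
    [Fintype m] {A : 𝕜 → Matrix l m 𝕜} {B : 𝕜 → Matrix m n 𝕜} {A' : Matrix l m 𝕜}
    {B' : Matrix m n 𝕜} {t : 𝕜}
    (hA : ∀ i j, HasDerivAt (fun s => A s i j) (A' i j) t)
    (hB : ∀ i j, HasDerivAt (fun s => B s i j) (B' i j) t) (i : l) (j : n) :
    HasDerivAt (fun s => (A s * B s) i j) ((A' * B t + A t * B') i j) t := by
  simp only [mul_apply, Matrix.add_apply, ← Finset.sum_add_distrib]
  exact HasDerivAt.fun_sum fun k _ => (hA i k).fun_mul (hB k j)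

noncomputable def rotZ (x : ℝ) : Matrix (Fin 3) (Fin 3) ℝ :=
  !![Real.cos x, -Real.sin x, 0; Real.sin x, Real.cos x, 0; 0, 0, 1]

noncomputable def rotY (x : ℝ) : Matrix (Fin 3) (Fin 3) ℝ :=
  !![Real.cos x, 0, Real.sin x; 0, 1, 0; -Real.sin x, 0, Real.cos x]

noncomputable def rotX (x : ℝ) : Matrix (Fin 3) (Fin 3) ℝ :=
  !![1, 0, 0; 0, Real.cos x, -Real.sin x; 0, Real.sin x, Real.cos x]

theorem Rb_eq_rotZ_mul_rotY_mul_rotX (ψ θ φ : ℝ) : Rb ψ θ φ = rotZ ψ * rotY θ * rotX φ := by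
  ext i j
  fin_cases i <;> fin_cases j <;>
    simp [Rb, rotZ, rotY, rotX, mul_apply, Fin.sum_univ_three] <;> ring

theorem Tb_mulVec (ψ θ a b c : ℝ) :
    Tb ψ θ *ᵥ ![a, b, c] =
      a • ![0, 0, 1] + b • (rotZ ψ *ᵥ ![0, 1, 0]) + c • ((rotZ ψ * rotY θ) *ᵥ ![1, 0, 0]) := by
  ext i
  fin_cases i <;>
    simp [Tb, rotZ, rotY, mulVec, dotProduct, Fin.sum_univ_three, vecHead, vecTail] <;> ring

theorem rotZ_mem_specialOrthogonalGroup (x : ℝ) : rotZ x ∈ specialOrthogonalGroup (Fin 3) ℝ := by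
  refine mem_specialOrthogonalGroup_iff.2 ⟨(mem_orthogonalGroup_iff _ _).2 ?_, ?_⟩
  · ext i j
    fin_cases i <;> fin_cases j <;> simp [rotZ, mul_apply, Fin.sum_univ_three] <;> ring_nf <;> simp
  · simp [rotZ, det_fin_three]; linear_combination Real.cos_sq_add_sin_sq x

theorem rotY_mem_specialOrthogonalGroup (x : ℝ) : rotY x ∈ specialOrthogonalGroup (Fin 3) ℝ := by
  refine mem_specialOrthogonalGroup_iff.2 ⟨(mem_orthogonalGroup_iff _ _).2 ?_, ?_⟩
  · ext i j
    fin_cases i <;> fin_cases j <;> simp [rotY, mul_apply, Fin.sum_univ_three] <;> ring_nf <;> simp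
  · simp [rotY, det_fin_three]; linear_combination Real.cos_sq_add_sin_sq x

theorem hasDerivAt_rotZ_apply (x : ℝ) (i j : Fin 3) :
    HasDerivAt (fun x => rotZ x i j) ((skew ![0, 0, 1] * rotZ x) i j) x := by
  fin_cases i <;> fin_cases j <;> simp [rotZ, skew, mul_apply, Fin.sum_univ_three]
  all_goals first
    | exact hasDerivAt_const _ _
    | exact Real.hasDerivAt_sin x
    | exact Real.hasDerivAt_cos x
    | exact (Real.hasDerivAt_sin x).neg

theorem hasDerivAt_rotY_apply (x : ℝ) (i j : Fin 3) :
    HasDerivAt (fun x => rotY x i j) ((skew ![0, 1, 0] * rotY x) i j) x := by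
  fin_cases i <;> fin_cases j <;> simp [rotY, skew, mul_apply, Fin.sum_univ_three]
  all_goals first
    | exact hasDerivAt_const _ _
    | exact Real.hasDerivAt_sin x
    | exact Real.hasDerivAt_cos x
    | exact (Real.hasDerivAt_sin x).neg

theorem hasDerivAt_rotX_apply (x : ℝ) (i j : Fin 3) :
    HasDerivAt (fun x => rotX x i j) ((skew ![1, 0, 0] * rotX x) i j) x := by
  fin_cases i <;> fin_cases j <;> simp [rotX, skew, mul_apply, Fin.sum_univ_three]
  all_goals first
    | exact hasDerivAt_const _ _
    | exact Real.hasDerivAt_sin x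
    | exact Real.hasDerivAt_cos x
    | exact (Real.hasDerivAt_sin x).neg

theorem skew_Tb_mulVec_mul_Rb (ψ θ φ a b c : ℝ) :
    skew (Tb ψ θ *ᵥ ![a, b, c]) * Rb ψ θ φ =
      (a • (skew ![0, 0, 1] * rotZ ψ) * rotY θ + rotZ ψ * (b • (skew ![0, 1, 0] * rotY θ))) *
          rotX φ + rotZ ψ * rotY θ * (c • (skew ![1, 0, 0] * rotX φ)) := by
  have hZ := rotZ_mem_specialOrthogonalGroup ψ
  have hZY := mul_mem hZ (rotY_mem_specialOrthogonalGroup θ)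
  rw [Tb_mulVec, skew_add, skew_add, skew_smul, skew_smul, skew_smul,
    Rb_eq_rotZ_mul_rotY_mul_rotX]
  simp only [add_mul, Matrix.mul_smul, Matrix.smul_mul, ← Matrix.mul_assoc]
  rw [mul_skew_of_mem_specialOrthogonalGroup hZ, mul_skew_of_mem_specialOrthogonalGroup hZY]
  simp only [Matrix.mul_assoc]

/-- For differentiable Euler angles `(ψ, θ, φ)`, the ZYX rotation `R(t) = R_b(ψ,θ,φ)`
satisfies `Ṙ = Skew(ω_b) R` with `ω_b = T_b(ψ,θ) (ψ̇, θ̇, φ̇)`; i.e. `T_b` transforms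
the Euler-angle rates into the body angular velocity. -/
theorem stmt_11 (ψ θ φ ψ' θ' φ' : ℝ → ℝ)
    (hψ : ∀ t, HasDerivAt ψ (ψ' t) t) (hθ : ∀ t, HasDerivAt θ (θ' t) t)
    (hφ : ∀ t, HasDerivAt φ (φ' t) t) :
    ∀ t (i j : Fin 3),
      HasDerivAt (fun s => Rb (ψ s) (θ s) (φ s) i j)
        ((skew (Tb (ψ t) (θ t) *ᵥ ![ψ' t, θ' t, φ' t]) * Rb (ψ t) (θ t) (φ t)) i j) t := by
  intro t i j
  have hZ : ∀ i j, HasDerivAt (fun s => rotZ (ψ s) i j)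
      ((ψ' t • (skew ![0, 0, 1] * rotZ (ψ t))) i j) t := fun i j =>
    (hasDerivAt_rotZ_apply (ψ t) i j).scomp t (hψ t)
  have hY : ∀ i j, HasDerivAt (fun s => rotY (θ s) i j)
      ((θ' t • (skew ![0, 1, 0] * rotY (θ t))) i j) t := fun i j =>
    (hasDerivAt_rotY_apply (θ t) i j).scomp t (hθ t)
  have hX : ∀ i j, HasDerivAt (fun s => rotX (φ s) i j)
      ((φ' t • (skew ![1, 0, 0] * rotX (φ t))) i j) t := fun i j =>
    (hasDerivAt_rotX_apply (φ t) i j).scomp t (hφ t)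
  rw [skew_Tb_mulVec_mul_Rb]
  simp only [Rb_eq_rotZ_mul_rotY_mul_rotX]
  exact hasDerivAt_matrix_mul_apply (hasDerivAt_matrix_mul_apply hZ hY) hX i j
end

section
/- Let A be a real n×n matrix, A_u a real m×m matrix, B ∈ ℝⁿ a column vector and X₀ ∈ ℝᵐ a row vector, and define the n×m matrix Φ(ι) := ∫₀^ι exp(A(ι − s)) (B X₀) exp(A_u s) ds for ι ≥ 0, where B X₀ denotes the n×m outer product and exp is the matrix exponential. Then for every h > 0 and every integer k ≥ 1, Φ(k h) = exp(A h) Φ((k−1) h) + Φ(h) exp(A_u (k−1) h). -/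
/-!
Split `∫₀^{c+h}` at `c`. On `[0, c]` the law `e^{(c+h-s)A} = e^{hA} e^{(c-s)A}` pulls `e^{hA}`
out of the integral, leaving `Φ(c)`; on `[c, c+h]` the shift `s ↦ s + c` together with
`e^{(s+c)A_u} = e^{sA_u} e^{cA_u}` turns the piece into `Φ(h) e^{cA_u}`. Taking `c = (k-1)h`
gives the recursion.
-/

open Matrix

section MatrixEntries

variable {ι κ ν : Type*} [Fintype κ] {a b : ℝ}

theorem intervalIntegral_mul_apply_left (P : Matrix ι κ ℝ) {f : ℝ → Matrix κ ν ℝ}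
    (hf : ∀ k j, IntervalIntegrable (fun s => f s k j) MeasureTheory.volume a b)
    (i : ι) (j : ν) :
    ∫ s in a..b, (P * f s) i j = (P * of fun k j => ∫ s in a..b, f s k j) i j := by
  simp only [mul_apply, of_apply]
  rw [intervalIntegral.integral_finsetSum fun k _ => (hf k j).const_mul (P i k)]
  simp only [intervalIntegral.integral_const_mul]

theorem intervalIntegral_mul_apply_right {f : ℝ → Matrix ι κ ℝ} (P : Matrix κ ν ℝ)
    (hf : ∀ i k, IntervalIntegrable (fun s => f s i k) MeasureTheory.volume a b)
    (i : ι) (j : ν) :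
    ∫ s in a..b, (f s * P) i j = ((of fun i k => ∫ s in a..b, f s i k) * P) i j := by
  simp only [mul_apply, of_apply]
  rw [intervalIntegral.integral_finsetSum fun k _ => (hf i k).mul_const (P k j)]
  simp only [intervalIntegral.integral_mul_const]

end MatrixEntries

section ExpSmul

open scoped Norms.Operator

variable {ι : Type*} [Fintype ι] [DecidableEq ι]

theorem continuous_exp_smul (A : Matrix ι ι ℝ) :
    Continuous fun t : ℝ => NormedSpace.exp (t • A) :=
  NormedSpace.exp_continuous.comp (continuous_id.smul continuous_const)

theorem exp_add_smul (A : Matrix ι ι ℝ) (a b : ℝ) :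
    NormedSpace.exp ((a + b) • A) = NormedSpace.exp (a • A) * NormedSpace.exp (b • A) := by
  rw [add_smul]
  exact Matrix.exp_add_of_commute _ _ (((Commute.refl A).smul_left a).smul_right b)

end ExpSmul

section ExpConvIntegral

variable {n m : Type*} [Fintype n] [DecidableEq n] [Fintype m] [DecidableEq m]
  (A : Matrix n n ℝ) (Au : Matrix m m ℝ) (M : Matrix n m ℝ)

noncomputable def expConvIntegral (ι : ℝ) : Matrix n m ℝ :=
  of fun i j => ∫ s in (0 : ℝ)..ι,
    (NormedSpace.exp ((ι - s) • A) * M * NormedSpace.exp (s • Au)) i j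

theorem continuous_exp_sub_smul_mul_mul_exp_smul (ι : ℝ) :
    Continuous fun s : ℝ => NormedSpace.exp ((ι - s) • A) * M * NormedSpace.exp (s • Au) :=
  (((continuous_exp_smul A).comp (continuous_const.sub continuous_id)).matrix_mul
    continuous_const).matrix_mul (continuous_exp_smul Au)

theorem intervalIntegrable_exp_sub_smul_mul_mul_exp_smul_apply (ι a b : ℝ) (i : n) (j : m) :
    IntervalIntegrable
      (fun s => (NormedSpace.exp ((ι - s) • A) * M * NormedSpace.exp (s • Au)) i j)
      MeasureTheory.volume a b :=
  ((continuous_exp_sub_smul_mul_mul_exp_smul A Au M ι).matrix_elem i j).intervalIntegrable a b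

theorem expConvIntegral_add (c h : ℝ) :
    expConvIntegral A Au M (c + h)
      = NormedSpace.exp (h • A) * expConvIntegral A Au M c
        + expConvIntegral A Au M h * NormedSpace.exp (c • Au) := by
  ext i j
  simp only [expConvIntegral, Matrix.add_apply, of_apply]
  have hint := intervalIntegrable_exp_sub_smul_mul_mul_exp_smul_apply A Au M
  rw [← intervalIntegral.integral_add_adjacent_intervals (hint _ 0 c i j) (hint _ c (c + h) i j)]
  congr 1
  · have hsplit : ∀ s : ℝ,
        NormedSpace.exp ((c + h - s) • A) * M * NormedSpace.exp (s • Au)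
          = NormedSpace.exp (h • A)
            * (NormedSpace.exp ((c - s) • A) * M * NormedSpace.exp (s • Au)) := by
      intro s
      rw [show c + h - s = h + (c - s) by ring, exp_add_smul, Matrix.mul_assoc, Matrix.mul_assoc,
        Matrix.mul_assoc]
    simp only [hsplit]
    exact intervalIntegral_mul_apply_left _ (hint c 0 c) i j
  · have hshift : ∀ s : ℝ,
        NormedSpace.exp ((c + h - (s + c)) • A) * M * NormedSpace.exp ((s + c) • Au)
          = NormedSpace.exp ((h - s) • A) * M * NormedSpace.exp (s • Au)
            * NormedSpace.exp (c • Au) := by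
      intro s
      rw [show c + h - (s + c) = h - s by ring, exp_add_smul]
      simp only [Matrix.mul_assoc]
    have hsub := intervalIntegral.integral_comp_add_right (a := 0) (b := h)
      (fun s => (NormedSpace.exp ((c + h - s) • A) * M * NormedSpace.exp (s • Au)) i j) c
    rw [zero_add, add_comm h c] at hsub
    simp only [← hsub, hshift]
    exact intervalIntegral_mul_apply_right _ (hint h 0 h) i j

end ExpConvIntegral

theorem stmt_18_general (n m : ℕ) (A : Matrix (Fin n) (Fin n) ℝ) (Au : Matrix (Fin m) (Fin m) ℝ)
    (B : Fin n → ℝ) (X₀ : Fin m → ℝ)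
    (Φ : ℝ → Matrix (Fin n) (Fin m) ℝ)
    (hΦ : ∀ ι : ℝ, Φ ι = Matrix.of fun i j =>
      ∫ s in (0 : ℝ)..ι,
        (NormedSpace.exp ((ι - s) • A) * vecMulVec B X₀ * NormedSpace.exp (s • Au)) i j)
    (h : ℝ) (k : ℕ) :
    Φ ((k : ℝ) * h)
      = NormedSpace.exp (h • A) * Φ (((k : ℝ) - 1) * h)
        + Φ h * NormedSpace.exp ((((k : ℝ) - 1) * h) • Au) := by
  obtain rfl : Φ = expConvIntegral A Au (vecMulVec B X₀) := funext hΦ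
  rw [← expConvIntegral_add, sub_one_mul, sub_add_cancel]

/-- Recursive off-line computation of the MPC prediction matrix
`Φ(ι) = ∫₀^ι e^{A(ι−s)} (B X₀) e^{A_u s} ds`: for every `h > 0` and `k ≥ 1`,
`Φ(kh) = e^{Ah} Φ((k−1)h) + Φ(h) e^{A_u (k−1)h}`. -/
theorem stmt_18 (n m : ℕ) (A : Matrix (Fin n) (Fin n) ℝ) (Au : Matrix (Fin m) (Fin m) ℝ)
    (B : Fin n → ℝ) (X₀ : Fin m → ℝ)
    (Φ : ℝ → Matrix (Fin n) (Fin m) ℝ)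
    (hΦ : ∀ ι : ℝ, Φ ι = Matrix.of fun i j =>
      ∫ s in (0 : ℝ)..ι,
        (NormedSpace.exp ((ι - s) • A) * vecMulVec B X₀ * NormedSpace.exp (s • Au)) i j)
    (h : ℝ) (hh : 0 < h) (k : ℕ) (hk : 1 ≤ k) :
    Φ ((k : ℝ) * h)
      = NormedSpace.exp (h • A) * Φ (((k : ℝ) - 1) * h)
        + Φ h * NormedSpace.exp ((((k : ℝ) - 1) * h) • Au) :=
  stmt_18_general n m A Au B X₀ Φ hΦ h k
end
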